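/- Let n = 2^k·m with m odd. Then the n-th letter (indexed from 1) of the fixed point ξ_Mu of the substitution a→aca, c→d, d→c is a if k=0, c if k is odd, and d if k is even and positive. -/

import Mathlib

/-- The alphabet `{a, c, d}`. -/
inductive ACD : Type
  | a | c | d
deriving DecidableEq

/-- The substitution `a → aca`, `c → d`, `d → c`. -/
def sMu : ACD → List ACD
  | ACD.a => [ACD.a, ACD.c, ACD.a]
  | ACD.c => [ACD.d]
  | ACD.d => [ACD.c]

/-- The substitution `sMu` extended to words by concatenation. -/
def sMuW (w : List ACD) : List ACD := (w.map sMu).flatten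

/-!
The substitution agrees on `{c, d}` with `τ = toggle : a ↦ c, c ↦ d, d ↦ c`, and
`s(a) = aca`, so `s` maps the word `a :: weaveA w = a τ(w₁) a τ(w₂) ⋯ a τ(wₙ) a` to
`a τ(v₁) a τ(v₂) ⋯ a τ(v₂ₙ₊₁) a`, where `v` is that word itself. Hence
`s^(K+1)(a) = a τ(x₁) a τ(x₂) ⋯ a` with `x = s^K(a)`, i.e. `ξ(2i + 1) = a` and
`ξ(2i) = τ(ξ(i))`, and so `ξ(2^k m) = τ^k(a)` for odd `m`.
-/

namespace ACD

def toggle : ACD → ACD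
  | a => c
  | c => d
  | d => c

theorem toggle_iterate_succ_a (k : ℕ) : toggle^[k + 1] a = if Even k then c else d := by
  induction k with
  | zero => rfl
  | succ k ih =>
    rw [Function.iterate_succ_apply', ih]
    by_cases hk : Even k <;> simp [hk, Nat.even_add_one, toggle]

theorem toggle_iterate_a (k : ℕ) :
    toggle^[k] a = if k = 0 then a else if Odd k then c else d := by
  cases k with
  | zero => rfl
  | succ k => simp [toggle_iterate_succ_a, Nat.odd_add_one]

end ACD

open ACD

def weaveA : List ACD → List ACD
  | [] => []
  | x :: w => toggle x :: a :: weaveA w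

theorem length_weaveA (w : List ACD) : (weaveA w).length = 2 * w.length := by
  induction w with
  | nil => rfl
  | cons x w ih => simp only [weaveA, List.length_cons, ih]; ring

theorem getElem?_weaveA_two_mul (w : List ACD) (i : ℕ) :
    (weaveA w)[2 * i]? = w[i]?.map toggle := by
  induction w generalizing i with
  | nil => rfl
  | cons x w ih => cases i <;> simp [weaveA, Nat.mul_succ, ih]

theorem getElem?_cons_weaveA_two_mul (w : List ACD) (i : ℕ) (hi : i ≤ w.length) :
    (a :: weaveA w)[2 * i]? = some a := by
  induction w generalizing i with
  | nil => simp_all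
  | cons x w ih => cases i <;> simp_all [weaveA, Nat.mul_succ]

theorem sMuW_cons (x : ACD) (w : List ACD) : sMuW (x :: w) = sMu x ++ sMuW w := rfl

theorem sMuW_weaveA (w : List ACD) : sMuW (weaveA w) = weaveA (weaveA w) := by
  induction w with
  | nil => rfl
  | cons x w ih => cases x <;> simp [weaveA, sMuW_cons, sMu, toggle, ih]

theorem sMuW_cons_a_weaveA (w : List ACD) :
    sMuW (a :: weaveA w) = a :: weaveA (a :: weaveA w) := by
  simp [sMuW_cons, sMu, sMuW_weaveA, weaveA, toggle]

theorem sMuW_iterate_succ_a (K : ℕ) :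
    sMuW^[K + 1] [a] = a :: weaveA (sMuW^[K] [a]) := by
  induction K with
  | zero => rfl
  | succ K ih => rw [Function.iterate_succ_apply', ih, sMuW_cons_a_weaveA]

theorem lt_length_sMuW_iterate_a (K : ℕ) : K < (sMuW^[K] [a]).length := by
  induction K with
  | zero => simp
  | succ K ih => simp only [sMuW_iterate_succ_a, List.length_cons, length_weaveA]; omega

def IsSMuLimit (ξ : ℕ → ACD) : Prop :=
  ∀ k n : ℕ, n < (sMuW^[k] [a]).length → (sMuW^[k] [a]).getD n a = ξ (n + 1)

namespace IsSMuLimit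

theorem getElem?_sMuW_iterate_a {ξ : ℕ → ACD} (hξ : IsSMuLimit ξ) {K n : ℕ}
    (hn : n < (sMuW^[K] [a]).length) :
    (sMuW^[K] [a])[n]? = some (ξ (n + 1)) := by
  rw [← hξ K n hn, List.getD_eq_getElem?_getD, List.getElem?_eq_getElem hn, Option.getD_some]

theorem apply_two_mul_add_one {ξ : ℕ → ACD} (hξ : IsSMuLimit ξ) (i : ℕ) :
    ξ (2 * i + 1) = a := by
  have hi := lt_length_sMuW_iterate_a i
  have h := getElem?_cons_weaveA_two_mul _ i hi.le
  rw [← sMuW_iterate_succ_a, hξ.getElem?_sMuW_iterate_a] at h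
  · exact Option.some_injective _ h
  · simp only [sMuW_iterate_succ_a, List.length_cons, length_weaveA]; omega

theorem apply_two_mul_add_two {ξ : ℕ → ACD} (hξ : IsSMuLimit ξ) (i : ℕ) :
    ξ (2 * i + 2) = toggle (ξ (i + 1)) := by
  have hi := lt_length_sMuW_iterate_a i
  have h := getElem?_weaveA_two_mul (sMuW^[i] [a]) i
  rw [hξ.getElem?_sMuW_iterate_a hi, ← List.getElem?_cons_succ (a := a),
    ← sMuW_iterate_succ_a, hξ.getElem?_sMuW_iterate_a] at h
  · exact Option.some_injective _ h
  · simp only [sMuW_iterate_succ_a, List.length_cons, length_weaveA]; omega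

theorem apply_two_pow_mul_odd {ξ : ℕ → ACD} (hξ : IsSMuLimit ξ) (k : ℕ) {m : ℕ} (hm : Odd m) :
    ξ (2 ^ k * m) = toggle^[k] a := by
  induction k with
  | zero =>
    obtain ⟨i, rfl⟩ := hm
    simpa using hξ.apply_two_mul_add_one i
  | succ k ih =>
    obtain ⟨i, hi⟩ := Nat.exists_eq_add_one.mpr (Nat.mul_pos (Nat.two_pow_pos k) hm.pos)
    have h2 : 2 ^ (k + 1) * m = 2 * i + 2 := by rw [pow_succ, mul_right_comm, hi]; ring
    rw [h2, hξ.apply_two_mul_add_two, ← hi, ih, Function.iterate_succ_apply']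

end IsSMuLimit

/-- Let `ξ` be the unique infinite string (indexed from 1) fixed by the
substitution `a → aca`, `c → d`, `d → c` and beginning with `a`; equivalently,
every iterate `sMu^k(a)` is a prefix of `ξ`.  Writing `n = 2^k * m` with `m`
odd, the `n`-th letter of `ξ` is `a` if `k = 0`, `c` if `k` is odd, and `d` if
`k` is even and positive. -/
theorem xiMu_letter
    (ξ : ℕ → ACD)
    (hprefix : ∀ k n : ℕ, n < (sMuW^[k] [ACD.a]).length →
      (sMuW^[k] [ACD.a]).getD n ACD.a = ξ (n + 1)) :
    ∀ k m : ℕ, Odd m →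
      ξ (2 ^ k * m) =
        if k = 0 then ACD.a else if Odd k then ACD.c else ACD.d := by
  intro k m hm
  rw [IsSMuLimit.apply_two_pow_mul_odd hprefix k hm, toggle_iterate_a]
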